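/- arXiv:1709.06979 — 5 statements merged into one kernel-verified Lean document; each statement's English description precedes it below -/
import Mathlib

section
/- If G is a permutation graph on n vertices and H_1, ..., H_n are permutation graphs, then the composition G[H_1, ..., H_n] (obtained by replacing vertex v_i of G with the graph H_i, joining all vertices of H_i to all vertices of H_j whenever v_i v_j is an edge of G) is also a permutation graph. -/
def graphOfPerm {n : ℕ} (π : Equiv.Perm (Fin n)) : SimpleGraph (Fin n) :=
  SimpleGraph.fromRel (fun i j => i < j ∧ π j < π i)

def IsPermGraph {V : Type*} (G : SimpleGraph V) : Prop :=
  ∃ (n : ℕ) (π : Equiv.Perm (Fin n)), Nonempty (G ≃g graphOfPerm π)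

/-- The composition `G[H₁, …, Hₙ]`: replace vertex `i` of `G` by the graph `H i`,
joining all vertices of `H i` to all vertices of `H j` whenever `i j` is an edge of `G`. -/
def composition {n : ℕ} (G : SimpleGraph (Fin n)) {V : Fin n → Type*}
    (H : ∀ i, SimpleGraph (V i)) : SimpleGraph (Σ i, V i) :=
  SimpleGraph.fromRel (fun x y =>
    if h : x.1 = y.1 then (H y.1).Adj (h ▸ x.2) y.2 else G.Adj x.1 y.1)

lemma exists_equiv_fin_lt {S K : Type*} [Fintype S] [LinearOrder K] (k : S → K)
    (hk : Function.Injective k) :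
    ∃ f : S ≃ Fin (Fintype.card S), ∀ x y, f x < f y ↔ k x < k y := by
  letI : LinearOrder S := LinearOrder.lift' k hk
  have hlt : ∀ x y : S, x < y ↔ k x < k y := by
    intro x y
    constructor
    · intro h; rcases lt_iff_le_and_ne.1 h with ⟨h1, h2⟩
      exact lt_of_le_of_ne h1 (fun e => h2 (hk e))
    · intro h; exact lt_of_le_of_ne (le_of_lt h) (fun e => absurd (e ▸ h) (lt_irrefl _))
  let e := (monoEquivOfFin S rfl).symm
  exact ⟨e.toEquiv, fun x y => by rw [← hlt]; exact e.lt_iff_lt⟩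

lemma composition_adj_same {n : ℕ} (G : SimpleGraph (Fin n)) {V : Fin n → Type*}
    (H : ∀ i, SimpleGraph (V i)) (i : Fin n) (a b : V i) :
    (composition G H).Adj ⟨i, a⟩ ⟨i, b⟩ ↔ (H i).Adj a b := by
  simp only [composition, SimpleGraph.fromRel_adj, dif_pos rfl]
  constructor
  · rintro ⟨-, h | h⟩
    · exact h
    · exact h.symm
  · intro h
    refine ⟨?_, Or.inl h⟩
    simp only [ne_eq, Sigma.mk.inj_iff, heq_eq_eq, true_and]
    exact fun e => (H i).loopless.irrefl b (e ▸ h)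

lemma composition_adj_ne {n : ℕ} (G : SimpleGraph (Fin n)) {V : Fin n → Type*}
    (H : ∀ i, SimpleGraph (V i)) {i j : Fin n} (hij : i ≠ j) (a : V i) (b : V j) :
    (composition G H).Adj ⟨i, a⟩ ⟨j, b⟩ ↔ G.Adj i j := by
  simp only [composition, SimpleGraph.fromRel_adj, dif_neg hij, dif_neg hij.symm]
  constructor
  · rintro ⟨-, h | h⟩
    · exact h
    · exact h.symm
  · intro h
    refine ⟨?_, Or.inl h⟩
    simp only [ne_eq, Sigma.mk.inj_iff]
    tauto

lemma graphOfPerm_adj {n : ℕ} (π : Equiv.Perm (Fin n)) (u v : Fin n) :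
    (graphOfPerm π).Adj u v ↔ u ≠ v ∧ ((u < v ∧ π v < π u) ∨ (v < u ∧ π u < π v)) := by
  simp [graphOfPerm, SimpleGraph.fromRel_adj]


/-- If `G` is a permutation graph and each `H i` is a permutation graph, then the
composition `G[H₁, …, Hₙ]` is a permutation graph. -/
theorem isPermGraph_composition {n : ℕ} (G : SimpleGraph (Fin n)) {V : Fin n → Type*}
    [∀ i, Fintype (V i)] (H : ∀ i, SimpleGraph (V i))
    (hG : IsPermGraph G) (hH : ∀ i, IsPermGraph (H i)) :
    IsPermGraph (composition G H) := by
  obtain ⟨n', π, ⟨φ⟩⟩ := hG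
  choose m σ hψ using hH
  have ψ : ∀ i, H i ≃g graphOfPerm (σ i) := fun i => (hψ i).some
  let k₁ : (Σ i, V i) → (Fin n') ×ₗ ℕ := fun x => toLex (φ x.1, ((ψ x.1) x.2 : ℕ))
  let k₂ : (Σ i, V i) → (Fin n') ×ₗ ℕ :=
    fun x => toLex (π (φ x.1), ((σ x.1) ((ψ x.1) x.2) : ℕ))
  have hk₁ : Function.Injective k₁ := by
    rintro ⟨i, a⟩ ⟨j, b⟩ h
    have h' : (φ i, ((ψ i) a : ℕ)) = (φ j, ((ψ j) b : ℕ)) := toLex.injective h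
    obtain ⟨h1, h2⟩ := Prod.mk.injEq .. ▸ h'
    have hij : i = j := φ.toEquiv.injective h1
    subst hij
    have hab : a = b := (ψ i).toEquiv.injective (Fin.val_injective h2)
    simp [hab]
  have hk₂ : Function.Injective k₂ := by
    rintro ⟨i, a⟩ ⟨j, b⟩ h
    have h' : (π (φ i), ((σ i) ((ψ i) a) : ℕ)) = (π (φ j), ((σ j) ((ψ j) b) : ℕ)) :=
      toLex.injective h
    obtain ⟨h1, h2⟩ := Prod.mk.injEq .. ▸ h'
    have hij : i = j := φ.toEquiv.injective (π.injective h1)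
    subst hij
    have hab : a = b := (ψ i).toEquiv.injective ((σ i).injective (Fin.val_injective h2))
    simp [hab]
  obtain ⟨f₁, hf₁⟩ := exists_equiv_fin_lt k₁ hk₁
  obtain ⟨f₂, hf₂⟩ := exists_equiv_fin_lt k₂ hk₂
  refine ⟨Fintype.card (Σ i, V i), f₁.symm.trans f₂, ⟨⟨f₁, ?_⟩⟩⟩
  rintro ⟨i, a⟩ ⟨j, b⟩
  have hτ : ∀ x, (f₁.symm.trans f₂) (f₁ x) = f₂ x := by intro x; simp
  rw [graphOfPerm_adj, hτ, hτ]
  by_cases hij : i = j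
  · subst hij
    rw [composition_adj_same, ← (ψ i).map_rel_iff, graphOfPerm_adj]
    have h1 : ∀ a b : V i, f₁ ⟨i, a⟩ < f₁ ⟨i, b⟩ ↔ (ψ i) a < (ψ i) b := by
      intro a b
      rw [hf₁]
      show toLex _ < toLex _ ↔ _
      rw [Prod.Lex.lt_iff]
      simp only [ofLex_toLex, lt_self_iff_false, false_or, eq_self_iff_true, true_and, Fin.lt_def]
    have h2 : ∀ a b : V i, f₂ ⟨i, a⟩ < f₂ ⟨i, b⟩ ↔ (σ i) ((ψ i) a) < (σ i) ((ψ i) b) := by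
      intro a b
      rw [hf₂]
      show toLex _ < toLex _ ↔ _
      rw [Prod.Lex.lt_iff]
      simp only [ofLex_toLex, lt_self_iff_false, false_or, eq_self_iff_true, true_and, Fin.lt_def]
    have hne : f₁ ⟨i, a⟩ ≠ f₁ ⟨i, b⟩ ↔ (ψ i) a ≠ (ψ i) b := by
      simp only [ne_eq, EmbeddingLike.apply_eq_iff_eq, EquivLike.apply_eq_iff_eq,
        Sigma.mk.inj_iff, heq_eq_eq, true_and]
    rw [h1, h1, h2, h2, hne]
  · rw [composition_adj_ne G H hij, ← φ.map_rel_iff, graphOfPerm_adj]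
    have hφ : φ i ≠ φ j := fun e => hij (φ.toEquiv.injective e)
    have hπφ : π (φ i) ≠ π (φ j) := fun e => hφ (π.injective e)
    have h1 : ∀ (p q : Σ i, V i), p.1 ≠ q.1 → (f₁ p < f₁ q ↔ φ p.1 < φ q.1) := by
      intro p q hpq
      rw [hf₁]
      show toLex _ < toLex _ ↔ _
      rw [Prod.Lex.lt_iff]
      simp only [ofLex_toLex, or_iff_left_iff_imp]
      rintro ⟨e, -⟩
      exact absurd (φ.toEquiv.injective e) hpq
    have h2 : ∀ (p q : Σ i, V i), p.1 ≠ q.1 → (f₂ p < f₂ q ↔ π (φ p.1) < π (φ q.1)) := by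
      intro p q hpq
      rw [hf₂]
      show toLex _ < toLex _ ↔ _
      rw [Prod.Lex.lt_iff]
      simp only [ofLex_toLex, or_iff_left_iff_imp]
      rintro ⟨e, -⟩
      exact absurd (φ.toEquiv.injective (π.injective e)) hpq
    rw [h1 _ _ hij, h1 _ _ (Ne.symm hij), h2 _ _ (Ne.symm hij), h2 _ _ hij]
    have hne : f₁ ⟨i, a⟩ ≠ f₁ ⟨j, b⟩ := by
      intro e
      exact hij (congrArg Sigma.fst (f₁.injective e))
    simp only [ne_eq, hne, not_false_eq_true, true_and, hφ]
end

section
/- The cycle graph C_n on n ≥ 5 vertices is not a permutation graph. -/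
open Fin.NatCast Fin.CommRing

/-- For `n ≥ 5`, the cycle graph `Cₙ` is not a permutation graph. -/
theorem cycleGraph_not_isPermGraph (n : ℕ) (hn : 5 ≤ n) :
    ¬ IsPermGraph (SimpleGraph.cycleGraph n) := by
  rintro ⟨n', π, ⟨e⟩⟩
  haveI : NeZero n := ⟨by omega⟩
  set G := SimpleGraph.cycleGraph n with hG
  set p : Fin n → Fin n' := fun v => e v with hp
  set q : Fin n → Fin n' := fun v => π (p v) with hq
  have hpinj : Function.Injective p := e.toEquiv.injective
  have hqinj : Function.Injective q := fun a b h => hpinj (π.injective h)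
  -- adjacency transfer
  have hadj : ∀ v w : Fin n, G.Adj v w ↔
      (p v < p w ∧ q w < q v) ∨ (p w < p v ∧ q v < q w) := by
    intro v w
    rw [← e.map_adj_iff]
    constructor
    · rintro ⟨-, h | h⟩
      · exact Or.inl h
      · exact Or.inr ⟨h.1, h.2⟩
    · rintro (h | h)
      · exact ⟨fun hh => absurd (congrArg π hh) h.2.ne', Or.inl h⟩
      · exact ⟨fun hh => absurd (congrArg π hh) h.2.ne, Or.inr ⟨h.1, h.2⟩⟩
  -- adjacent pairs: p and q orders are reversed
  have hA : ∀ v w : Fin n, G.Adj v w → p w < p v → q v < q w := by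
    intro v w h hpw
    rcases (hadj v w).1 h with ⟨h1, _⟩ | ⟨_, h2⟩
    · exact absurd h1 (asymm hpw)
    · exact h2
  -- non-adjacent pairs: p and q orders agree
  have hN : ∀ v w : Fin n, v ≠ w → ¬ G.Adj v w → p w < p v → q w < q v := by
    intro v w hne hna hpw
    rcases lt_trichotomy (q w) (q v) with h | h | h
    · exact h
    · exact absurd (hqinj h) (fun hh => hne hh.symm)
    · exact absurd ((hadj v w).2 (Or.inr ⟨hpw, h⟩)) hna
  -- vertex of maximal position
  obtain ⟨m, hm⟩ : ∃ m : Fin n, ∀ v : Fin n, p v ≤ p m := by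
    haveI : Nonempty (Fin n) := ⟨⟨0, by omega⟩⟩
    exact Finite.exists_max p
  have hmlt : ∀ v : Fin n, v ≠ m → p v < p m :=
    fun v hv => lt_of_le_of_ne (hm v) (fun h => hv (hpinj h))
  -- arithmetic helpers
  have hval : ∀ k : ℕ, k < n → ∀ a : Fin n, (a + (k : Fin n) - a).val = k := by
    intro k hk a
    have e1 : (a + (k : Fin n) - a : Fin n) = ((k : ℕ) : Fin n) := by ring
    rw [e1, Fin.val_natCast, Nat.mod_eq_of_lt hk]
  have hval' : ∀ k : ℕ, 0 < k → k ≤ n → ∀ a : Fin n, (a - (a + (k : Fin n)) : Fin n).val = n - k := by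
    intro k hk0 hkn a
    have e1 : (a - (a + (k : Fin n)) : Fin n) = ((n - k : ℕ) : Fin n) := by
      have hz : ((n : ℕ) : Fin n) = 0 := by simp
      push_cast [Nat.cast_sub hkn]
      rw [hz]; ring
    rw [e1, Fin.val_natCast, Nat.mod_eq_of_lt (by omega)]
  -- adjacency of vertices at given cycle distance
  have hAdjk : ∀ (a : Fin n) (k : ℕ), 0 < k → k < n →
      (G.Adj a (a + (k : Fin n)) ↔ (k = 1 ∨ k = n - 1)) := by
    intro a k hk0 hkn
    rw [hG, SimpleGraph.cycleGraph_adj']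
    have h1 := hval k hkn a
    have h2 := hval' k hk0 (le_of_lt hkn) a
    constructor
    · rintro (h | h)
      · rw [h2] at h; omega
      · rw [h1] at h; omega
    · rintro (h | h)
      · exact Or.inr (by rw [h1, h])
      · exact Or.inl (by rw [h2]; omega)
  have hNek : ∀ (a : Fin n) (k : ℕ), 0 < k → k < n → a ≠ a + (k : Fin n) := by
    intro a k hk0 hkn h
    have := hval k hkn a
    rw [← h] at this
    simp at this
    omega
  -- the four neighbors-of-interest of m, written as m + constants
  have adj1 : ∀ a : Fin n, G.Adj a (a + (1 : ℕ)) :=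
    fun a => (hAdjk a 1 (by omega) (by omega)).2 (Or.inl rfl)
  have adjn1 : ∀ a : Fin n, G.Adj a (a + ((n - 1 : ℕ) : Fin n)) :=
    fun a => (hAdjk a (n-1) (by omega) (by omega)).2 (Or.inr rfl)
  have nadj2 : ∀ a : Fin n, ¬ G.Adj a (a + ((2 : ℕ) : Fin n)) := by
    intro a h
    have := (hAdjk a 2 (by omega) (by omega)).1 h
    omega
  have nadjn2 : ∀ a : Fin n, ¬ G.Adj a (a + ((n - 2 : ℕ) : Fin n)) := by
    intro a h
    have := (hAdjk a (n-2) (by omega) (by omega)).1 h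
    omega
  have nadj3 : ∀ a : Fin n, ¬ G.Adj a (a + ((3 : ℕ) : Fin n)) := by
    intro a h
    have := (hAdjk a 3 (by omega) (by omega)).1 h
    omega
  have nadjn3 : ∀ a : Fin n, ¬ G.Adj a (a + ((n - 3 : ℕ) : Fin n)) := by
    intro a h
    have := (hAdjk a (n-3) (by omega) (by omega)).1 h
    omega
  -- the key configuration lemma
  have key : ∀ M B c : Fin n, G.Adj m M → G.Adj m B → G.Adj M c →
      c ≠ m → ¬ G.Adj m c → B ≠ M → ¬ G.Adj B M → B ≠ c → ¬ G.Adj B c →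
      q B < q M → False := by
    intro M B c hmM hmB hMc hcm hnmc hBM hnBM hBc hnBc hqBM
    -- q c < q m : c is a non-neighbor of m, p c < p m
    have hqcm : q c < q m := hN m c (Ne.symm hcm) hnmc (hmlt c hcm)
    -- q m < q B : B is a neighbor of m, p B < p m
    have hqmB : q m < q B := hA m B hmB (hmlt B hmB.ne')
    -- p M < p c : M adjacent c with q c < q M
    have hqcM : q c < q M := lt_trans (lt_trans hqcm hqmB) hqBM
    have hpMc : p M < p c := by
      rcases lt_trichotomy (p M) (p c) with h | h | h
      · exact h
      · exact absurd (hpinj h) (fun hh => hqcM.ne (congrArg π (congrArg p hh)).symm)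
      · exact absurd (hA M c hMc h) (asymm hqcM)
    -- p B < p M : B, M non-adjacent with q B < q M
    have hpBM : p B < p M := by
      rcases lt_trichotomy (p B) (p M) with h | h | h
      · exact h
      · exact absurd (hpinj h) hBM
      · exact absurd (hN B M hBM hnBM h) (asymm hqBM)
    -- B, c non-adjacent with p B < p c forces q B < q c, contradiction
    have := hN c B (Ne.symm hBc) (fun h => hnBc h.symm) (lt_trans hpBM hpMc)
    exact absurd (lt_trans hqcm hqmB) (asymm this)
  -- instantiate: the two neighbors of m are m+1 and m+(n-1)
  have h2eq : (m + (1:ℕ)) + ((1:ℕ) : Fin n) = m + ((2:ℕ) : Fin n) := by push_cast; ring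
  have hn2eq : (m + ((n-1:ℕ) : Fin n)) + ((n-1:ℕ) : Fin n) = m + ((n-2:ℕ) : Fin n) := by
    have hz : ((n : ℕ) : Fin n) = 0 := by simp
    push_cast [Nat.cast_sub (by omega : 1 ≤ n), Nat.cast_sub (by omega : 2 ≤ n)]
    rw [hz]; ring
  have h3eq : (m + ((n-1:ℕ) : Fin n)) + ((3:ℕ) : Fin n) = m + ((2:ℕ) : Fin n) := by
    have hz : ((n : ℕ) : Fin n) = 0 := by simp
    push_cast [Nat.cast_sub (by omega : 1 ≤ n)]
    rw [hz]; ring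
  have hn3eq : (m + ((1:ℕ) : Fin n)) + ((n-3:ℕ) : Fin n) = m + ((n-2:ℕ) : Fin n) := by
    have hz : ((n : ℕ) : Fin n) = 0 := by simp
    push_cast [Nat.cast_sub (by omega : 3 ≤ n), Nat.cast_sub (by omega : 2 ≤ n)]
    rw [hz]; ring
  have h' : (m + ((1:ℕ) : Fin n)) + ((n-2:ℕ) : Fin n) = m + ((n-1:ℕ) : Fin n) := by
    have hz : ((n : ℕ) : Fin n) = 0 := by simp
    push_cast [Nat.cast_sub (by omega : 2 ≤ n), Nat.cast_sub (by omega : 1 ≤ n)]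
    rw [hz]; ring
  have hBMne : (m + ((n-1:ℕ) : Fin n)) ≠ (m + ((1:ℕ) : Fin n)) := by
    intro h
    have hv := hval (n-2) (by omega) (m + ((1:ℕ) : Fin n))
    rw [h', h] at hv
    simp at hv
    omega
  have hBMnadj : ¬ G.Adj (m + ((n-1:ℕ) : Fin n)) (m + ((1:ℕ) : Fin n)) := by
    intro h
    exact nadjn2 (m + ((1:ℕ) : Fin n)) (by rw [h']; exact h.symm)
  rcases lt_trichotomy (q (m + ((n-1:ℕ) : Fin n))) (q (m + ((1:ℕ) : Fin n))) with h | h | h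
  · -- M = m+1, B = m+(n-1), c = m+2
    refine key (m + ((1:ℕ) : Fin n)) (m + ((n-1:ℕ) : Fin n)) (m + ((2:ℕ) : Fin n))
      (adj1 m) (adjn1 m) (by rw [← h2eq]; exact adj1 _)
      (Ne.symm (hNek m 2 (by omega) (by omega))) (nadj2 m)
      hBMne hBMnadj
      ?_ ?_ h
    · rw [← h3eq]; exact hNek _ 3 (by omega) (by omega)
    · rw [← h3eq]; exact nadj3 _
  · exact hBMne (hqinj h)
  · -- M = m+(n-1), B = m+1, c = m+(n-2)
    refine key (m + ((n-1:ℕ) : Fin n)) (m + ((1:ℕ) : Fin n)) (m + ((n-2:ℕ) : Fin n))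
      (adjn1 m) (adj1 m) (by rw [← hn2eq]; exact adjn1 _)
      (Ne.symm (hNek m (n-2) (by omega) (by omega))) (nadjn2 m)
      (Ne.symm hBMne) (fun hh => hBMnadj hh.symm)
      ?_ ?_ h
    · rw [← hn3eq]; exact hNek _ (n-3) (by omega) (by omega)
    · rw [← hn3eq]; exact nadjn3 _
end

section
/- Let G* be a graph with maximum degree d, and let G be a graph of minimum order such that G* is a blow-up of G (where G* is also required to be a permutation graph and blow-ups are obtained by replacing each vertex by a complete or empty graph). Then G has no pair of twin vertices each of degree d. -/
def Twins {V : Type*} (G : SimpleGraph V) (u v : V) : Prop :=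
  ∀ w, w ≠ u → w ≠ v → (G.Adj u w ↔ G.Adj v w)

/-- Blow-up of `G`: vertex `v` is replaced by a complete graph on `k v` vertices if
`b v = true`, and by an empty graph on `k v` vertices if `b v = false`; all edges are
placed between the replacements of adjacent vertices. -/
def blowup {V : Type*} (G : SimpleGraph V) (k : V → ℕ) (b : V → Bool) :
    SimpleGraph (Σ v, Fin (k v)) :=
  SimpleGraph.fromRel (fun x y =>
    (x.1 = y.1 ∧ b x.1 = true) ∨ (x.1 ≠ y.1 ∧ G.Adj x.1 y.1))

lemma blowup_adj {V : Type*} (G : SimpleGraph V) (k : V → ℕ) (b : V → Bool)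
    (x y : Σ v, Fin (k v)) :
    (blowup G k b).Adj x y ↔
      x ≠ y ∧ ((x.1 = y.1 ∧ b x.1 = true) ∨ (x.1 ≠ y.1 ∧ G.Adj x.1 y.1)) := by
  rw [blowup, SimpleGraph.fromRel_adj]
  constructor
  · rintro ⟨hne, h | h⟩
    · exact ⟨hne, h⟩
    · refine ⟨hne, ?_⟩
      rcases h with ⟨h1, h2⟩ | ⟨h1, h2⟩
      · exact Or.inl ⟨h1.symm, h1 ▸ h2⟩
      · exact Or.inr ⟨Ne.symm h1, h2.symm⟩
  · rintro ⟨hne, h⟩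
    exact ⟨hne, Or.inl h⟩

section Transport

variable {γ δ : Type*} (e : γ ≃ δ) (k : γ → ℕ)

/-- Transport the vertex type of a blow-up along an equivalence of base types. -/
def blowupMapEquiv : (Σ v, Fin (k v)) ≃ (Σ w, Fin ((k ∘ e.symm) w)) where
  toFun x := ⟨e x.1, ⟨x.2.val, by simpa using x.2.isLt⟩⟩
  invFun y := ⟨e.symm y.1, ⟨y.2.val, y.2.isLt⟩⟩
  left_inv x := by
    refine Sigma.ext (by simp) ?_
    rw [Fin.heq_ext_iff (by simp)]
  right_inv y := by
    refine Sigma.ext (by simp) ?_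
    rw [Fin.heq_ext_iff (by simp)]

/-- Transport a blow-up representation along an equivalence of base vertex types. -/
def blowupMapIso (H : SimpleGraph γ) (b : γ → Bool) :
    blowup H k b ≃g blowup (H.comap e.symm) (k ∘ e.symm) (b ∘ e.symm) where
  toEquiv := blowupMapEquiv e k
  map_rel_iff' := by
    intro x y
    rw [blowup_adj, blowup_adj, ne_eq, (blowupMapEquiv e k).injective.eq_iff, ← ne_eq]
    refine and_congr_right fun _ => ?_
    obtain ⟨p, i⟩ := x
    obtain ⟨q, j⟩ := y
    simp [blowupMapEquiv, SimpleGraph.comap_adj]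

end Transport

/-- If there is a blow-up representation over a strictly smaller base, minimality fails. -/
lemma shrink_contra {α β β' : Type*} [Fintype α] [Fintype β] [Fintype β']
    (Gstar : SimpleGraph α) (hcard : Fintype.card β' < Fintype.card β)
    (H : SimpleGraph β') (k' : β' → ℕ) (b' : β' → Bool)
    (hiso : Nonempty (Gstar ≃g blowup H k' b'))
    (hmin : ∀ (m : ℕ) (H : SimpleGraph (Fin m)) (k' : Fin m → ℕ) (b' : Fin m → Bool),
      Nonempty (Gstar ≃g blowup H k' b') → Fintype.card β ≤ m) : False := by
  obtain ⟨ψ⟩ := hiso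
  have := hmin (Fintype.card β') (H.comap (Fintype.equivFin β').symm)
    (k' ∘ (Fintype.equivFin β').symm) (b' ∘ (Fintype.equivFin β').symm)
    ⟨ψ.trans (blowupMapIso (Fintype.equivFin β') k' H b')⟩
  omega

/-- Deleting a vertex with an empty blob from the base. -/
def deleteIso {β : Type*} (G : SimpleGraph β) (k : β → ℕ) (b : β → Bool) (w0 : β)
    (h0 : k w0 = 0) :
    blowup G k b ≃g blowup (G.comap (Subtype.val : {x : β // x ≠ w0} → β))
      (fun x => k x.1) (fun x => b x.1) where
  toFun x := ⟨⟨x.1, fun h =>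
      absurd (Nat.lt_of_lt_of_eq x.2.isLt (by rw [h, h0])) (Nat.not_lt_zero _)⟩, x.2⟩
  invFun y := ⟨y.1.1, y.2⟩
  left_inv x := rfl
  right_inv y := rfl
  map_rel_iff' := by
    rintro ⟨p, i⟩ ⟨q, j⟩
    simp only [Equiv.coe_fn_mk, blowup_adj, SimpleGraph.comap_adj, ne_eq, Sigma.mk.inj_iff,
      Subtype.mk.injEq]

/-- Every neighbor of the base point of a max-degree blob has index 0. -/
lemma neighbor_index_zero {β : Type*} [Fintype β] (G : SimpleGraph β) (k : β → ℕ)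
    (b : β → Bool) (d : ℕ) (hk : ∀ w, 1 ≤ k w) (u : β)
    (hd : (G.neighborSet u).ncard = d)
    (hmax : ∀ y, ((blowup G k b).neighborSet y).ncard ≤ d)
    (z : Σ w, Fin (k w)) (hz : (blowup G k b).Adj ⟨u, ⟨0, hk u⟩⟩ z) :
    (z.2 : ℕ) = 0 := by
  by_contra hz2
  set f : β → Σ w, Fin (k w) := fun w => ⟨w, ⟨0, hk w⟩⟩ with hf
  have hfinj : Function.Injective f := fun a b h => congrArg Sigma.fst h
  have hsub : insert z (f '' G.neighborSet u) ⊆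
      (blowup G k b).neighborSet ⟨u, ⟨0, hk u⟩⟩ := by
    rintro y (rfl | ⟨w, hw, rfl⟩)
    · exact hz
    · rw [SimpleGraph.mem_neighborSet, blowup_adj]
      have hadj : G.Adj u w := hw
      have hnuw : u ≠ w := G.ne_of_adj hadj
      exact ⟨fun h => hnuw (congrArg Sigma.fst h), Or.inr ⟨hnuw, hadj⟩⟩
  have hznot : z ∉ f '' G.neighborSet u := by
    rintro ⟨w, _, rfl⟩
    exact hz2 rfl
  have h1 : (insert z (f '' G.neighborSet u)).ncard = d + 1 := by
    rw [Set.ncard_insert_of_notMem hznot (Set.toFinite _),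
      Set.ncard_image_of_injective _ hfinj, hd]
  have h2 := Set.ncard_le_ncard hsub (Set.toFinite _)
  have h3 := hmax ⟨u, ⟨0, hk u⟩⟩
  omega

section Merge

variable {β : Type*} [DecidableEq β] (G : SimpleGraph β) (k : β → ℕ) (b : β → Bool)
  (u v : β) (hne : u ≠ v)

/-- The blob sizes after merging twin `v` into `u`. -/
def mk' : {x : β // x ≠ v} → ℕ := fun x => if x.1 = u then k u + k v else k x.1

open scoped Classical in
/-- The blob types after merging twin `v` into `u`. -/
noncomputable def mb' : {x : β // x ≠ v} → Bool :=
  fun x => if x.1 = u then decide (G.Adj u v) else b x.1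

/-- Merging twin blobs: the vertex bijection. -/
def mergeEquiv : (Σ w : β, Fin (k w)) ≃ (Σ x : {x : β // x ≠ v}, Fin (mk' k u v x)) where
  toFun x := match x with
    | ⟨w, i⟩ =>
      if h : w = v then
        ⟨⟨u, hne⟩, ⟨k u + (i : ℕ), by
          show k u + (i : ℕ) < if u = u then k u + k v else k u
          rw [if_pos rfl]
          have := Nat.lt_of_lt_of_eq i.isLt (congrArg k h)
          omega⟩⟩
      else ⟨⟨w, h⟩, ⟨(i : ℕ), by
          show (i : ℕ) < if w = u then k u + k v else k w
          split <;> rename_i h2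
          · have := Nat.lt_of_lt_of_eq i.isLt (congrArg k h2)
            omega
          · exact i.isLt⟩⟩
  invFun y := match y with
    | ⟨⟨w, hw⟩, j⟩ =>
      if h : w = u then
        (if h2 : (j : ℕ) < k u then ⟨u, ⟨(j : ℕ), h2⟩⟩
         else ⟨v, ⟨(j : ℕ) - k u, by
            have hj : (j : ℕ) < if w = u then k u + k v else k w := j.isLt
            rw [if_pos h] at hj
            omega⟩⟩)
      else ⟨w, ⟨(j : ℕ), by
          have hj : (j : ℕ) < if w = u then k u + k v else k w := j.isLt
          rwa [if_neg h] at hj⟩⟩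
  left_inv := by
    rintro ⟨w, i⟩
    dsimp only
    by_cases h : w = v
    · subst h
      rw [dif_pos rfl]
      dsimp only
      rw [dif_pos rfl, dif_neg (by omega)]
      refine Sigma.ext rfl ?_
      rw [Fin.heq_ext_iff rfl]
      simp
    · rw [dif_neg h]
      dsimp only
      by_cases h2 : w = u
      · subst h2
        rw [dif_pos rfl, dif_pos i.isLt]
      · rw [dif_neg h2]
  right_inv := by
    rintro ⟨⟨w, hw⟩, j⟩
    dsimp only
    by_cases h : w = u
    · rw [dif_pos h]
      by_cases h2 : (j : ℕ) < k u
      · rw [dif_pos h2]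
        dsimp only
        rw [dif_neg hne]
        refine Sigma.ext (Subtype.ext h.symm) ?_
        rw [Fin.heq_ext_iff (by simp [mk', h])]
      · rw [dif_neg h2]
        dsimp only
        rw [dif_pos rfl]
        refine Sigma.ext (Subtype.ext h.symm) ?_
        rw [Fin.heq_ext_iff (by simp [mk', h])]
        have hj : (j : ℕ) < if w = u then k u + k v else k w := j.isLt
        rw [if_pos h] at hj
        show k u + ((j : ℕ) - k u) = (j : ℕ)
        omega
    · rw [dif_neg h]
      dsimp only
      rw [dif_neg hw]

lemma mergeEquiv_fst (w : β) (t : Fin (k w)) :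
    (((mergeEquiv k u v hne) ⟨w, t⟩).1 : β) = if w = v then u else w := by
  rcases eq_or_ne w v with h | h
  · simp only [mergeEquiv, Equiv.coe_fn_mk, dif_pos h, if_pos h]
  · simp only [mergeEquiv, Equiv.coe_fn_mk, dif_neg h, if_neg h]

/-- Merging twin blobs: the graph isomorphism. -/
noncomputable def mergeIso (htw : Twins G u v)
    (hclique : G.Adj u v → k u = 1 ∧ k v = 1)
    (hbu : b u = true → k u = 1) (hbv : b v = true → k v = 1) :
    blowup G k b ≃g blowup (G.comap (Subtype.val : {x : β // x ≠ v} → β))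
      (mk' k u v) (mb' G b u v) where
  toEquiv := mergeEquiv k u v hne
  map_rel_iff' := by
    intro x y
    rw [blowup_adj, blowup_adj, ne_eq, (mergeEquiv k u v hne).injective.eq_iff, ← ne_eq]
    refine and_congr_right fun hxy => ?_
    obtain ⟨p, i⟩ := x
    obtain ⟨q, j⟩ := y
    simp only [Subtype.ext_iff, SimpleGraph.comap_adj, mergeEquiv_fst, mb', ne_eq]
    by_cases hp : p = v <;> by_cases hq : q = v
    · -- p = q = v
      have hpq : p = q := hp.trans hq.symm
      have hvals : (i : ℕ) ≠ (j : ℕ) := fun hvv =>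
        hxy (Sigma.ext hpq ((Fin.heq_ext_iff (congrArg k hpq)).mpr hvv))
      have hi : (i : ℕ) < k v := hp ▸ i.isLt
      have hj : (j : ℕ) < k v := hq ▸ j.isLt
      have h2 : 2 ≤ k v := by omega
      have hA1 : ¬ G.Adj u v := fun hd => by have := (hclique hd).2; omega
      have hA2 : ¬ b v = true := fun hd => by have := hbv hd; omega
      simp [hp, hq, hA1, hA2]
    · -- p = v, q ≠ v
      by_cases hq2 : q = u
      · simp [hp, hq2, hne, Ne.symm hne]
        exact G.adj_comm u v
      · have huq : u ≠ q := Ne.symm hq2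
        have hvq : v ≠ q := fun h => hq h.symm
        have htww := htw q hq2 hq
        simp [hp, hq, huq, hvq]
        exact htww
    · -- p ≠ v, q = v
      by_cases hp2 : p = u
      · simp [hp2, hq, hne]
      · have htww := htw p hp2 hp
        simp [hp, hq, hp2]
        rw [G.adj_comm p u, G.adj_comm p v]
        exact htww
    · -- p ≠ v, q ≠ v
      by_cases hpq : p = q
      · by_cases hpu : p = u
        · have hqu : q = u := hpq.symm.trans hpu
          have hvals : (i : ℕ) ≠ (j : ℕ) := fun hvv =>
            hxy (Sigma.ext hpq ((Fin.heq_ext_iff (congrArg k hpq)).mpr hvv))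
          have hi : (i : ℕ) < k u := hpu ▸ i.isLt
          have hj : (j : ℕ) < k u := hqu ▸ j.isLt
          have h2 : 2 ≤ k u := by omega
          have hD1 : ¬ G.Adj u v := fun hd => by have := (hclique hd).1; omega
          have hD2 : ¬ b u = true := fun hd => by have := hbu hd; omega
          simp [hpu, hqu, hne, hD1, hD2]
        · have hqu : ¬ q = u := fun h => hpu (hpq.trans h)
          simp [hpq, hq, hqu]
      · simp [hp, hq, hpq]

end Merge

/-- If `G*` is a permutation graph with maximum degree `d` and `G` is a graph of minimum
order such that `G*` is a blow-up of `G`, then `G` has no pair of twins both of degree `d`. -/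
theorem no_max_degree_twins_in_minimal_blowup_base
    {α : Type*} [Fintype α] (Gstar : SimpleGraph α) (d : ℕ)
    {β : Type*} [Fintype β] (G : SimpleGraph β) (k : β → ℕ) (b : β → Bool)
    (hperm : IsPermGraph Gstar)
    (hmax : (∀ v, (Gstar.neighborSet v).ncard ≤ d) ∧ ∃ v, (Gstar.neighborSet v).ncard = d)
    (hblow : Nonempty (Gstar ≃g blowup G k b))
    (hmin : ∀ (m : ℕ) (H : SimpleGraph (Fin m)) (k' : Fin m → ℕ) (b' : Fin m → Bool),
      Nonempty (Gstar ≃g blowup H k' b') → Fintype.card β ≤ m) :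
    ¬ ∃ u v, u ≠ v ∧ Twins G u v ∧
      (G.neighborSet u).ncard = d ∧ (G.neighborSet v).ncard = d := by
  classical
  rintro ⟨u, v, huv, htw, hdu, hdv⟩
  obtain ⟨φ⟩ := hblow
  -- all blobs are nonempty, by minimality
  have hk : ∀ w, 1 ≤ k w := by
    intro w0
    by_contra h
    have h0 : k w0 = 0 := by omega
    exact shrink_contra (β := β) Gstar
      (Fintype.card_subtype_lt (p := fun x => x ≠ w0) (x := w0) (by simp)) _ _ _
      ⟨φ.trans (deleteIso G k b w0 h0)⟩ hmin
  -- the maximum degree of the blow-up is at most d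
  have hmax' : ∀ y, ((blowup G k b).neighborSet y).ncard ≤ d := by
    intro y
    have hcongr : ((blowup G k b).neighborSet y).ncard =
        (Gstar.neighborSet (φ.symm y)).ncard := by
      rw [← Nat.card_coe_set_eq, ← Nat.card_coe_set_eq]
      exact Nat.card_congr (φ.symm.mapNeighborSet y)
    rw [hcongr]
    exact hmax.1 _
  have main : ∀ (w : β), (G.neighborSet w).ncard = d →
      ∀ z, (blowup G k b).Adj ⟨w, ⟨0, hk w⟩⟩ z → (z.2 : ℕ) = 0 :=
    fun w hw => neighbor_index_zero G k b d hk w hw hmax'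
  -- degree facts
  have hbu : b u = true → k u = 1 := by
    intro hb
    by_contra hku
    have h2 : 2 ≤ k u := by have := hk u; omega
    have hadj : (blowup G k b).Adj ⟨u, ⟨0, hk u⟩⟩ ⟨u, ⟨1, by omega⟩⟩ := by
      rw [blowup_adj]
      refine ⟨?_, Or.inl ⟨rfl, hb⟩⟩
      intro hcontra
      have := (Sigma.mk.inj_iff.mp hcontra).2
      simp [Fin.ext_iff] at this
    have := main u hdu ⟨u, ⟨1, by omega⟩⟩ hadj
    simp at this
  have hbv : b v = true → k v = 1 := by
    intro hb
    by_contra hkv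
    have h2 : 2 ≤ k v := by have := hk v; omega
    have hadj : (blowup G k b).Adj ⟨v, ⟨0, hk v⟩⟩ ⟨v, ⟨1, by omega⟩⟩ := by
      rw [blowup_adj]
      refine ⟨?_, Or.inl ⟨rfl, hb⟩⟩
      intro hcontra
      have := (Sigma.mk.inj_iff.mp hcontra).2
      simp [Fin.ext_iff] at this
    have := main v hdv ⟨v, ⟨1, by omega⟩⟩ hadj
    simp at this
  have hclique : G.Adj u v → k u = 1 ∧ k v = 1 := by
    intro hadjuv
    constructor
    · by_contra hku
      have h2 : 2 ≤ k u := by have := hk u; omega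
      have hadj' : (blowup G k b).Adj ⟨v, ⟨0, hk v⟩⟩ ⟨u, ⟨1, by omega⟩⟩ := by
        rw [blowup_adj]
        exact ⟨fun hc => (Ne.symm huv) (congrArg Sigma.fst hc),
          Or.inr ⟨Ne.symm huv, hadjuv.symm⟩⟩
      have := main v hdv ⟨u, ⟨1, by omega⟩⟩ hadj'
      simp at this
    · by_contra hkv
      have h2 : 2 ≤ k v := by have := hk v; omega
      have hadj' : (blowup G k b).Adj ⟨u, ⟨0, hk u⟩⟩ ⟨v, ⟨1, by omega⟩⟩ := by
        rw [blowup_adj]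
        exact ⟨fun hc => huv (congrArg Sigma.fst hc), Or.inr ⟨huv, hadjuv⟩⟩
      have := main u hdu ⟨v, ⟨1, by omega⟩⟩ hadj'
      simp at this
  -- merge the twins, contradicting minimality
  exact shrink_contra (β := β) Gstar
    (Fintype.card_subtype_lt (p := fun x => x ≠ v) (x := v) (by simp)) _ _ _
    ⟨φ.trans (mergeIso G k b u v huv htw hclique hbu hbv)⟩ hmin
end

section
/- There is no connected 3-regular permutation graph on n vertices when n is odd or n ∈ {2, 8, 12}. -/
def IsRegular' {V : Type*} (G : SimpleGraph V) (r : ℕ) : Prop :=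
  ∀ v, (G.neighborSet v).ncard = r

def adjB (l : List ℕ) (i j : ℕ) : Bool :=
  (decide (i < j) && decide (l.getD j 0 < l.getD i 0)) ||
  (decide (j < i) && decide (l.getD i 0 < l.getD j 0))

def iterF (l : List ℕ) : ℕ → Finset ℕ
  | 0 => {0}
  | k+1 => iterF l k ∪ (Finset.range l.length).filter (fun j => ∃ i ∈ iterF l k, adjB l i j = true)

def connB (l : List ℕ) : Bool := decide (Finset.range l.length ⊆ iterF l l.length)

def degOK (pre : List ℕ) (v : ℕ) (rem : List ℕ) : Bool :=
  pre.countP (fun x => decide (v < x)) + rem.countP (fun x => decide (x < v)) == 3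

def searchAux : ℕ → List ℕ → List ℕ → Bool
  | 0, pre, _ => connB pre
  | k+1, pre, rem => rem.any fun v => degOK pre v (rem.erase v) && searchAux k (pre ++ [v]) (rem.erase v)

def permList {n : ℕ} (π : Equiv.Perm (Fin n)) : List ℕ :=
  (List.finRange n).map (fun k => (π k : ℕ))

@[simp] lemma length_permList {n : ℕ} (π : Equiv.Perm (Fin n)) : (permList π).length = n := by
  simp [permList]

lemma getD_permList {n : ℕ} (π : Equiv.Perm (Fin n)) (a : Fin n) :
    (permList π).getD (a : ℕ) 0 = π a := by
  rw [List.getD_eq_getElem _ _ (by simp)]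
  simp [permList]

lemma adj_iff {n : ℕ} (π : Equiv.Perm (Fin n)) (a b : Fin n) :
    (graphOfPerm π).Adj a b ↔ adjB (permList π) a b = true := by
  simp only [graphOfPerm, SimpleGraph.fromRel_adj, adjB, getD_permList,
    Bool.or_eq_true, Bool.and_eq_true, decide_eq_true_eq, Fin.lt_def]
  constructor
  · rintro ⟨hne, h | h⟩
    · exact Or.inl ⟨h.1, h.2⟩
    · exact Or.inr ⟨h.1, h.2⟩
  · rintro (⟨h1, h2⟩ | ⟨h1, h2⟩)
    · exact ⟨fun h => by simp [h] at h1, Or.inl ⟨h1, h2⟩⟩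
    · exact ⟨fun h => by simp [h] at h1, Or.inr ⟨h1, h2⟩⟩

lemma iterF_mono (l : List ℕ) {k m : ℕ} (h : k ≤ m) : iterF l k ⊆ iterF l m := by
  induction m with
  | zero => simpa [Nat.le_zero.mp h]
  | succ m ih =>
    rcases Nat.lt_or_ge k (m+1) with h' | h'
    · exact (ih (Nat.lt_succ_iff.mp h')).trans (by rw [iterF]; exact Finset.subset_union_left)
    · have : k = m + 1 := le_antisymm h h'
      subst this; rfl

lemma walk_mem_iterF {n : ℕ} (π : Equiv.Perm (Fin n)) {a b : Fin n}
    (w : (graphOfPerm π).Walk a b) (k : ℕ) (ha : (a : ℕ) ∈ iterF (permList π) k) :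
    (b : ℕ) ∈ iterF (permList π) (k + w.length) := by
  induction w generalizing k with
  | nil => simpa
  | @cons u v c hadj p ih =>
    have hv : (v : ℕ) ∈ iterF (permList π) (k + 1) := by
      rw [iterF]
      refine Finset.mem_union_right _ (Finset.mem_filter.mpr ⟨?_, ⟨u, ha, (adj_iff π u v).mp hadj⟩⟩)
      simpa using v.isLt
    have := ih (k+1) hv
    rw [SimpleGraph.Walk.length_cons]
    convert this using 2
    omega

lemma connected_connB {n : ℕ} (π : Equiv.Perm (Fin n))
    (hc : (graphOfPerm π).Connected) : connB (permList π) = true := by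
  have hpos : 0 < n := by
    rcases hc.nonempty with ⟨v⟩; exact v.pos
  rw [connB, decide_eq_true_eq]
  intro j hj
  rw [Finset.mem_range, length_permList] at hj
  set b : Fin n := ⟨j, hj⟩
  have hreach : (graphOfPerm π).Reachable ⟨0, hpos⟩ b := hc.preconnected _ _
  obtain ⟨w⟩ := hreach
  have h0 : ((⟨0, hpos⟩ : Fin n) : ℕ) ∈ iterF (permList π) 0 := by simp [iterF]
  have := walk_mem_iterF π w.bypass 0 h0
  have hlen : w.bypass.length ≤ (permList π).length := by
    have := w.bypass_isPath.length_lt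
    simp only [Fintype.card_fin] at this
    simp only [length_permList]
    omega
  exact iterF_mono _ (by omega) this

lemma getD_drop' (l : List ℕ) (k j : ℕ) (h : k + j < l.length) :
    (l.drop k).getD j 0 = l.getD (k + j) 0 := by
  rw [List.getD_eq_getElem _ _ (by rw [List.length_drop]; omega), List.getD_eq_getElem _ _ h]
  simp

lemma filter_range_card_eq_countP_take (l : List ℕ) (b : ℕ → Bool) :
    ∀ i, i ≤ l.length →
      ((Finset.range i).filter (fun j => b (l.getD j 0) = true)).card = (l.take i).countP b := by
  intro i
  induction i with
  | zero => simp
  | succ i ih =>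
    intro hi
    have hi' : i < l.length := hi
    rw [Finset.range_add_one, Finset.filter_insert]
    have htake : l.take (i+1) = l.take i ++ [l.getD i 0] := by
      rw [List.take_succ, List.getElem?_eq_getElem hi', List.getD_eq_getElem _ _ hi']
      rfl
    rw [htake, List.countP_append]
    split_ifs with hb
    · rw [Finset.card_insert_of_notMem (by simp), ih (le_of_lt hi')]
      simp only [List.getD_eq_getElem?_getD] at hb
      simp [List.countP_cons, hb]
    · rw [ih (le_of_lt hi')]
      simp only [List.getD_eq_getElem?_getD] at hb
      simp [List.countP_cons, hb]

lemma filter_range_card_eq_countP_drop (l : List ℕ) (b : ℕ → Bool) (k : ℕ) :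
    ((Finset.range (l.length - k)).filter (fun j => b (l.getD (k + j) 0) = true)).card
      = (l.drop k).countP b := by
  have h1 := filter_range_card_eq_countP_take (l.drop k) b (l.drop k).length le_rfl
  rw [List.take_length] at h1
  rw [← h1, List.length_drop]
  apply Finset.card_bij (fun j _ => j)
  · intro j hj
    rw [Finset.mem_filter, Finset.mem_range] at hj ⊢
    refine ⟨hj.1, ?_⟩
    rw [getD_drop' _ _ _ (by omega)]
    exact hj.2
  · intro a _ b _ h; exact h
  · intro j hj
    rw [Finset.mem_filter, Finset.mem_range] at hj
    refine ⟨j, ?_, rfl⟩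
    rw [Finset.mem_filter, Finset.mem_range]
    refine ⟨hj.1, ?_⟩
    rw [getD_drop' _ _ _ (by omega)] at hj
    exact hj.2

lemma deg_eq {n : ℕ} (π : Equiv.Perm (Fin n)) (i : Fin n) :
    ((graphOfPerm π).neighborSet i).ncard =
      ((permList π).take (i : ℕ)).countP (fun x => decide ((permList π).getD (i : ℕ) 0 < x)) +
      ((permList π).drop ((i : ℕ)+1)).countP (fun x => decide (x < (permList π).getD (i : ℕ) 0)) := by
  classical
  set l := permList π with hl
  have hlen : l.length = n := length_permList π
  set c := l.getD (i : ℕ) 0 with hc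
  have h1 : ((graphOfPerm π).neighborSet i).ncard
      = (Finset.univ.filter (fun j : Fin n => adjB l (i : ℕ) (j : ℕ) = true)).card := by
    rw [← Nat.card_coe_set_eq, Nat.card_eq_fintype_card, ← Set.toFinset_card]
    congr 1
    ext j
    simp only [Set.mem_toFinset, SimpleGraph.mem_neighborSet, Finset.mem_filter,
      Finset.mem_univ, true_and]
    exact adj_iff π i j
  have h2 : (Finset.univ.filter (fun j : Fin n => adjB l (i : ℕ) (j : ℕ) = true)).card
      = ((Finset.range n).filter (fun j => adjB l (i : ℕ) j = true)).card := by
    rw [← Nat.Iio_eq_range, ← Fin.map_valEmbedding_univ, Finset.filter_map, Finset.card_map]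
    rfl
  have hsplit : ((Finset.range n).filter (fun j => adjB l (i : ℕ) j = true))
      = ((Finset.range n).filter (fun j => j < (i : ℕ) ∧ decide (c < l.getD j 0) = true))
        ∪ ((Finset.range n).filter (fun j => (i : ℕ) < j ∧ decide (l.getD j 0 < c) = true)) := by
    rw [← Finset.filter_or]
    apply Finset.filter_congr
    intro j _
    simp only [adjB, ← hc, Bool.or_eq_true, Bool.and_eq_true, decide_eq_true_eq, eq_iff_iff]
    tauto
  have hdisj : Disjoint
      ((Finset.range n).filter (fun j => j < (i : ℕ) ∧ decide (c < l.getD j 0) = true))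
      ((Finset.range n).filter (fun j => (i : ℕ) < j ∧ decide (l.getD j 0 < c) = true)) := by
    rw [Finset.disjoint_left]
    intro a ha hb
    rw [Finset.mem_filter] at ha hb
    omega
  have hA : ((Finset.range n).filter (fun j => j < (i : ℕ) ∧ decide (c < l.getD j 0) = true))
      = ((Finset.range (i : ℕ)).filter (fun j => decide (c < l.getD j 0) = true)) := by
    ext j
    simp only [Finset.mem_filter, Finset.mem_range]
    have := i.isLt
    constructor
    · rintro ⟨_, h1, h2⟩; exact ⟨h1, h2⟩
    · rintro ⟨h1, h2⟩; exact ⟨by omega, h1, h2⟩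
  have hB : ((Finset.range n).filter (fun j => (i : ℕ) < j ∧ decide (l.getD j 0 < c) = true))
      = ((Finset.range (n - ((i : ℕ)+1))).filter
          (fun j => decide (l.getD (((i : ℕ)+1) + j) 0 < c) = true)).image (fun j => ((i : ℕ)+1) + j) := by
    ext j
    simp only [Finset.mem_filter, Finset.mem_range, Finset.mem_image]
    constructor
    · rintro ⟨hjn, hij, h2⟩
      exact ⟨j - ((i : ℕ)+1), ⟨by omega, by rw [show (i : ℕ) + 1 + (j - ((i : ℕ)+1)) = j by omega]; exact h2⟩, by omega⟩
    · rintro ⟨k, ⟨hk, h2⟩, rfl⟩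
      exact ⟨by omega, by omega, h2⟩
  have hcardB : (((Finset.range (n - ((i : ℕ)+1))).filter
          (fun j => decide (l.getD (((i : ℕ)+1) + j) 0 < c) = true)).image (fun j => ((i : ℕ)+1) + j)).card
      = ((Finset.range (n - ((i : ℕ)+1))).filter
          (fun j => decide (l.getD (((i : ℕ)+1) + j) 0 < c) = true)).card :=
    Finset.card_image_of_injective _ (fun a b h => by omega)
  rw [h1, h2, hsplit, Finset.card_union_of_disjoint hdisj, hA, hB, hcardB]
  congr 1
  · exact filter_range_card_eq_countP_take l (fun x => decide (c < x)) (i : ℕ) (by omega)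
  · have := filter_range_card_eq_countP_drop l (fun x => decide (x < c)) ((i : ℕ)+1)
    rw [hlen] at this
    exact this

lemma searchAux_sound : ∀ (suf pre rem : List ℕ), rem.Perm suf →
    (∀ i : ℕ, pre.length ≤ i → i < (pre ++ suf).length →
      ((pre ++ suf).take i).countP (fun x => decide ((pre ++ suf).getD i 0 < x)) +
      ((pre ++ suf).drop (i+1)).countP (fun x => decide (x < (pre ++ suf).getD i 0)) = 3) →
    connB (pre ++ suf) = true → searchAux suf.length pre rem = true := by
  intro suf
  induction suf with
  | nil =>
    intro pre rem hperm _ hconn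
    simpa [searchAux] using hconn
  | cons v s ih =>
    intro pre rem hperm hdeg hconn
    simp only [List.length_cons, searchAux]
    rw [List.any_eq_true]
    refine ⟨v, hperm.mem_iff.mpr (by simp), ?_⟩
    rw [Bool.and_eq_true]
    have htake : (pre ++ v :: s).take pre.length = pre := by
      rw [List.take_left' rfl]
    have hdrop0 : (pre ++ v :: s).drop pre.length = v :: s := List.drop_left
    have hgetD : (pre ++ v :: s).getD pre.length 0 = v := by
      have h := getD_drop' (pre ++ v :: s) pre.length 0 (by simp)
      rw [hdrop0] at h
      simpa using h.symm
    have hdrop : (pre ++ v :: s).drop (pre.length + 1) = s := by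
      rw [← List.drop_drop, hdrop0]
      rfl
    have herase : (rem.erase v).Perm s := by
      have h := hperm.erase v
      simpa [List.erase_cons_head] using h
    constructor
    · have h3 := hdeg pre.length (le_refl _) (by simp)
      rw [htake, hgetD, hdrop] at h3
      rw [degOK, Nat.beq_eq_true_eq]
      rw [herase.countP_eq]
      exact h3
    · have hl : pre ++ v :: s = (pre ++ [v]) ++ s := by simp
      have hs : s.length = ((rem.erase v).length) := herase.length_eq.symm
      have := ih (pre ++ [v]) (rem.erase v) herase
        (by
          intro i hi hi'
          rw [← hl]
          exact hdeg i (by simp at hi ⊢; omega) (by simpa [← hl] using hi'))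
        (by rw [← hl]; exact hconn)
      exact this

lemma main_case {n : ℕ} (π : Equiv.Perm (Fin n))
    (hs : searchAux n [] (List.range n) = false)
    (hc : (graphOfPerm π).Connected)
    (hr : IsRegular' (graphOfPerm π) 3) : False := by
  set l := permList π with hl
  have hlen : l.length = n := length_permList π
  have hinj : Function.Injective (fun k : Fin n => ((π k : Fin n) : ℕ)) := by
    intro a b h
    exact π.injective (Fin.val_injective h)
  have hnodup : l.Nodup := List.Nodup.map hinj (List.nodup_finRange n)
  have hperm : (List.range n).Perm l := by
    rw [List.perm_ext_iff_of_nodup List.nodup_range hnodup]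
    intro x
    simp only [List.mem_range, hl, permList, List.mem_map, List.mem_finRange, true_and]
    constructor
    · intro hx
      exact ⟨π.symm ⟨x, hx⟩, by simp⟩
    · rintro ⟨a, rfl⟩
      exact (π a).isLt
  have hdeg : ∀ i : ℕ, ([] : List ℕ).length ≤ i → i < (([] : List ℕ) ++ l).length →
      ((([] : List ℕ) ++ l).take i).countP (fun x => decide ((([] : List ℕ) ++ l).getD i 0 < x)) +
      ((([] : List ℕ) ++ l).drop (i+1)).countP (fun x => decide (x < (([] : List ℕ) ++ l).getD i 0)) = 3 := by
    intro i _ hi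
    rw [List.nil_append] at hi ⊢
    rw [hlen] at hi
    have h1 := hr ⟨i, hi⟩
    have h2 := deg_eq π ⟨i, hi⟩
    rw [h1] at h2
    exact h2.symm
  have hconn : connB (([] : List ℕ) ++ l) = true := by
    rw [List.nil_append]
    exact connected_connB π hc
  have := searchAux_sound l [] (List.range n) hperm hdeg hconn
  rw [hlen] at this
  rw [this] at hs
  simp at hs

lemma isRegular'_of_iso {V W : Type*} {G : SimpleGraph V} {H : SimpleGraph W}
    (e : G ≃g H) {r : ℕ} (h : IsRegular' G r) : IsRegular' H r := by
  intro v
  have heq : H.neighborSet v ≃ G.neighborSet (e.symm v) := e.symm.mapNeighborSet v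
  rw [← Nat.card_coe_set_eq, Nat.card_congr heq, Nat.card_coe_set_eq]
  exact h _

/-- There is no connected 3-regular permutation graph on `n` vertices when `n` is odd
or `n ∈ {2, 8, 12}`. -/
theorem no_cubic_permutation_graph (n : ℕ) (hn : Odd n ∨ n = 2 ∨ n = 8 ∨ n = 12) :
    ¬ ∃ G : SimpleGraph (Fin n), G.Connected ∧ IsRegular' G 3 ∧ IsPermGraph G := by
  rintro ⟨G, hconn, hreg, m, π, ⟨e⟩⟩
  have hmn : m = n := Fin.equiv_iff_eq.mp ⟨e.toEquiv.symm⟩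
  subst hmn
  have hconn' : (graphOfPerm π).Connected := e.connected_iff.mp hconn
  have hreg' : IsRegular' (graphOfPerm π) 3 := isRegular'_of_iso e hreg
  classical
  have hdeg : ∀ v, (graphOfPerm π).degree v = 3 := fun v => by
    rw [← SimpleGraph.card_neighborSet_eq_degree, ← Nat.card_eq_fintype_card,
      Nat.card_coe_set_eq, hreg' v]
  rcases hn with h | h | h | h
  · have heven := SimpleGraph.even_card_odd_degree_vertices (graphOfPerm π)
    rw [Finset.filter_true_of_mem (fun v _ => by rw [hdeg v]; decide)] at heven
    rw [Finset.card_univ, Fintype.card_fin] at heven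
    exact (Nat.not_even_iff_odd.mpr h) heven
  · subst h
    have hlt := (graphOfPerm π).degree_lt_card_verts 0
    rw [hdeg, Fintype.card_fin] at hlt
    omega
  · subst h
    exact main_case π (by decide) hconn' hreg'
  · subst h
    exact main_case π (by decide) hconn' hreg'
end

section
/- The number of equivalence classes of compositions of m into parts of size 2 and 3, where a composition and its reverse are identified, satisfies: for even m > 3, the count equals the count for m−2 plus the count for m−3; for odd m > 5, it equals the count for m−2 plus the count for m−3 minus t((m−5)/2), where t(x) is the number of (ordered) compositions of x into parts of size 2 and 3. -/
/-- Compositions of `m` into parts of size 2 and 3. -/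
def Comp23 (m : ℕ) : Type :=
  {l : List ℕ // (∀ p ∈ l, p = 2 ∨ p = 3) ∧ l.sum = m}

/-- `t x`: the number of (ordered) compositions of `x` into parts of size 2 and 3. -/
noncomputable def numComp23 (x : ℕ) : ℕ := Nat.card (Comp23 x)

/-- Identify a composition with its reverse. -/
def revSetoid (m : ℕ) : Setoid (Comp23 m) where
  r l l' := l.1 = l'.1 ∨ l.1 = l'.1.reverse
  iseqv := by
    constructor
    · intro l; exact Or.inl rfl
    · rintro l l' (h | h)
      · exact Or.inl h.symm
      · exact Or.inr (by rw [h, List.reverse_reverse])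
    · rintro l l' l'' (h | h) (h' | h')
      · exact Or.inl (h.trans h')
      · exact Or.inr (h ▸ h')
      · exact Or.inr (by rw [h, h'])
      · exact Or.inl (by rw [h, h', List.reverse_reverse])

/-- The number of compositions of `m` into parts of size 2 and 3, counted up to
reversal. -/
noncomputable def numComp23UpToRev (m : ℕ) : ℕ := Nat.card (Quotient (revSetoid m))

def comps : ℕ → Finset (List ℕ)
  | 0 => {[]}
  | 1 => ∅
  | 2 => {[2]}
  | (n+3) => ((comps (n+1)).image (2 :: ·)) ∪ ((comps n).image (3 :: ·))

theorem mem_comps (m : ℕ) (l : List ℕ) :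
    l ∈ comps m ↔ (∀ p ∈ l, p = 2 ∨ p = 3) ∧ l.sum = m := by
  induction m using comps.induct generalizing l with
  | case1 =>
    simp only [comps, Finset.mem_singleton]
    constructor
    · rintro rfl; simp
    · rintro ⟨hp, hs⟩
      rcases l with _ | ⟨a, tl⟩
      · rfl
      · rcases hp a (by simp) with rfl | rfl <;> simp_all <;> omega
  | case2 =>
    simp only [comps, Finset.notMem_empty, false_iff]
    rintro ⟨hp, hs⟩
    rcases l with _ | ⟨a, tl⟩
    · simp at hs
    · rcases hp a (by simp) with rfl | rfl <;> simp at hs <;>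
        rcases tl with _ | ⟨b, tl⟩ <;> simp_all <;>
        rcases hp.1 with rfl | rfl <;> omega
  | case3 =>
    simp only [comps, Finset.mem_singleton]
    constructor
    · rintro rfl; simp
    · rintro ⟨hp, hs⟩
      rcases l with _ | ⟨a, tl⟩
      · simp at hs
      · rcases hp a (by simp) with rfl | rfl <;> simp at hs ⊢
        · rcases tl with _ | ⟨b, tl⟩
          · rfl
          · exfalso; rcases hp b (by simp) with rfl | rfl <;> simp_all <;> omega
        · rcases tl with _ | ⟨b, tl⟩ <;> simp_all
          rcases hp.1 with rfl | rfl <;> omega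
  | case4 n ih1 ih2 =>
    simp only [comps, Finset.mem_union, Finset.mem_image]
    constructor
    · rintro (⟨a, ha, rfl⟩ | ⟨a, ha, rfl⟩)
      · rw [ih1] at ha
        refine ⟨?_, by simp [ha.2]; omega⟩
        intro p hp
        rcases List.mem_cons.1 hp with rfl | h
        · exact Or.inl rfl
        · exact ha.1 _ h
      · rw [ih2] at ha
        refine ⟨?_, by simp [ha.2]; omega⟩
        intro p hp
        rcases List.mem_cons.1 hp with rfl | h
        · exact Or.inr rfl
        · exact ha.1 _ h
    · rintro ⟨hp, hs⟩
      rcases l with _ | ⟨a, tl⟩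
      · simp at hs
      · have htl : ∀ p ∈ tl, p = 2 ∨ p = 3 := fun p h => hp p (by simp [h])
        rcases hp a (by simp) with rfl | rfl
        · simp at hs
          exact Or.inl ⟨tl, (ih1 tl).2 ⟨htl, by omega⟩, rfl⟩
        · simp at hs
          exact Or.inr ⟨tl, (ih2 tl).2 ⟨htl, by omega⟩, rfl⟩

def tc (m : ℕ) : ℕ := (comps m).card

theorem comps_reverse {m : ℕ} {l : List ℕ} (h : l ∈ comps m) : l.reverse ∈ comps m := by
  rw [mem_comps] at h ⊢
  exact ⟨fun p hp => h.1 p (List.mem_reverse.1 hp), by rw [List.sum_reverse]; exact h.2⟩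

theorem tc_rec (n : ℕ) : tc (n + 3) = tc (n + 1) + tc n := by
  have hinj2 : Function.Injective (fun a : List ℕ => 2 :: a) := fun a b h => by
    simpa using h
  have hinj3 : Function.Injective (fun a : List ℕ => 3 :: a) := fun a b h => by
    simpa using h
  have hd : Disjoint ((comps (n+1)).image (2 :: ·)) ((comps n).image (3 :: ·)) := by
    rw [Finset.disjoint_left]
    rintro l hl hl'
    simp only [Finset.mem_image] at hl hl'
    obtain ⟨a, _, rfl⟩ := hl
    obtain ⟨b, _, h⟩ := hl'
    simp at h
  rw [tc, tc, tc, show comps (n+3) = ((comps (n+1)).image (2 :: ·)) ∪ ((comps n).image (3 :: ·)) from rfl,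
    Finset.card_union_of_disjoint hd, Finset.card_image_of_injective _ hinj2,
    Finset.card_image_of_injective _ hinj3]

theorem numComp23_eq (x : ℕ) : numComp23 x = tc x := by
  have e : Comp23 x ≃ {l : List ℕ // l ∈ comps x} :=
    Equiv.subtypeEquivRight (fun l => (mem_comps x l).symm)
  rw [numComp23, Nat.card_congr e, Nat.card_eq_fintype_card, Fintype.card_coe, tc]

/-- palindromic compositions -/
def palc (m : ℕ) : Finset (List ℕ) := (comps m).filter (fun l => l.reverse = l)
def qc (m : ℕ) : ℕ := (palc m).card
/-- canonical representatives -/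
def rc (m : ℕ) : ℕ := ((comps m).filter (fun l => l ≤ l.reverse)).card

theorem numComp23UpToRev_eq (m : ℕ) : numComp23UpToRev m = rc m := by
  have key : ∀ c : Comp23 m,
      min c.1 c.1.reverse ∈ (comps m).filter (fun l => l ≤ l.reverse) := by
    intro c
    have hc : c.1 ∈ comps m := (mem_comps m c.1).2 c.2
    rcases le_total c.1 c.1.reverse with h | h
    · rw [min_eq_left h]; exact Finset.mem_filter.2 ⟨hc, h⟩
    · rw [min_eq_right h]
      refine Finset.mem_filter.2 ⟨comps_reverse hc, ?_⟩
      rw [List.reverse_reverse]; exact h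
  let f : Quotient (revSetoid m) → {l // l ∈ (comps m).filter (fun l => l ≤ l.reverse)} :=
    Quotient.lift (fun c => ⟨min c.1 c.1.reverse, key c⟩) (by
      rintro c c' (h | h)
      · simp only [Subtype.mk.injEq, h]
      · simp only [Subtype.mk.injEq]
        rw [h, List.reverse_reverse, min_comm])
  have hbij : Function.Bijective f := by
    constructor
    · rintro ⟨c⟩ ⟨c'⟩ h
      have h' : min c.1 c.1.reverse = min c'.1 c'.1.reverse :=
        congrArg Subtype.val h
      apply Quotient.sound
      rcases min_choice c.1 c.1.reverse with h1 | h1 <;>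
        rcases min_choice c'.1 c'.1.reverse with h2 | h2 <;>
        rw [h1] at h' <;> rw [h2] at h'
      · exact Or.inl h'
      · exact Or.inr h'
      · exact Or.inr (by rw [← h', List.reverse_reverse])
      · exact Or.inl (List.reverse_injective h')
    · rintro ⟨l, hl⟩
      obtain ⟨hl1, hl2⟩ := Finset.mem_filter.1 hl
      refine ⟨⟦⟨l, (mem_comps m l).1 hl1⟩⟧, ?_⟩
      simp only [f, Quotient.lift_mk, Subtype.mk.injEq]
      exact Subtype.ext (min_eq_left hl2)
  rw [numComp23UpToRev, Nat.card_congr (Equiv.ofBijective f hbij),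
    Nat.card_eq_fintype_card, Fintype.card_coe, rc]

theorem count_key (m : ℕ) : tc m + qc m = 2 * rc m := by
  have h0 := Finset.card_filter_add_card_filter_not
    (s := comps m) (p := fun l => l ≤ l.reverse)
  have h1 : (comps m).filter (fun l => ¬ l ≤ l.reverse)
      = (comps m).filter (fun l => l.reverse < l) := by
    apply Finset.filter_congr; intro l _; simp [not_le]
  have h2 : ((comps m).filter (fun l => l.reverse < l)).card
      = ((comps m).filter (fun l => l < l.reverse)).card := by
    apply Finset.card_bij (fun l _ => l.reverse)
    · intro a ha
      obtain ⟨ha1, ha2⟩ := Finset.mem_filter.1 ha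
      exact Finset.mem_filter.2 ⟨comps_reverse ha1, by simpa using ha2⟩
    · intro a _ b _ h; exact List.reverse_injective h
    · intro b hb
      obtain ⟨hb1, hb2⟩ := Finset.mem_filter.1 hb
      exact ⟨b.reverse, Finset.mem_filter.2 ⟨comps_reverse hb1, by simpa using hb2⟩, by simp⟩
  have h3 : (comps m).filter (fun l => l ≤ l.reverse)
      = (comps m).filter (fun l => l < l.reverse) ∪ (comps m).filter (fun l => l.reverse = l) := by
    rw [← Finset.filter_or]
    apply Finset.filter_congr; intro l _
    constructor
    · intro h
      rcases lt_or_eq_of_le h with h | h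
      · exact Or.inl h
      · exact Or.inr h.symm
    · rintro (h | h)
      · exact le_of_lt h
      · exact le_of_eq h.symm
  have h4 : Disjoint ((comps m).filter (fun l => l < l.reverse))
      ((comps m).filter (fun l => l.reverse = l)) := by
    rw [Finset.disjoint_left]
    intro l hl hl'
    have a1 := (Finset.mem_filter.1 hl).2
    have a2 := (Finset.mem_filter.1 hl').2
    rw [a2] at a1
    exact lt_irrefl l a1
  have h5 : ((comps m).filter (fun l => l ≤ l.reverse)).card
      = ((comps m).filter (fun l => l < l.reverse)).card
        + ((comps m).filter (fun l => l.reverse = l)).card := by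
    rw [h3, Finset.card_union_of_disjoint h4]
  rw [h1, h2] at h0
  show (comps m).card + ((comps m).filter (fun l => l.reverse = l)).card
      = 2 * ((comps m).filter (fun l => l ≤ l.reverse)).card
  omega

theorem pal_decomp {m : ℕ} {l : List ℕ} (hl : l ∈ palc (m + 4)) :
    ∃ c a, l = c :: (a ++ [c]) ∧ a.reverse = a := by
  obtain ⟨hc, hrev⟩ := Finset.mem_filter.1 hl
  rw [mem_comps] at hc
  obtain ⟨hp, hs⟩ := hc
  rcases l with _ | ⟨c, tl⟩
  · simp at hs
  · rcases List.eq_nil_or_concat tl with rfl | ⟨a, e, rfl⟩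
    · exfalso; rcases hp c (by simp) with rfl | rfl <;> simp at hs
    · have h1 : e :: (a.reverse ++ [c]) = c :: (a ++ [e]) := by
        simpa using hrev
      have he : e = c := by injection h1
      subst he
      have h2 : a.reverse ++ [e] = a ++ [e] := by injection h1
      have ha : a.reverse = a := by simpa using h2
      exact ⟨e, a, by simp, ha⟩

theorem palc_rec (m : ℕ) : palc (m + 6) =
    ((palc (m + 2)).image (fun a => 2 :: (a ++ [2])))
      ∪ ((palc m).image (fun a => 3 :: (a ++ [3]))) := by
  ext l
  simp only [Finset.mem_union, Finset.mem_image]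
  constructor
  · intro hl
    have hl' : l ∈ palc (m + 2 + 4) := by rwa [show m + 2 + 4 = m + 6 from by omega]
    obtain ⟨c, a, rfl, ha⟩ := pal_decomp hl'
    obtain ⟨hc, hrev⟩ := Finset.mem_filter.1 hl
    rw [mem_comps] at hc
    obtain ⟨hp, hs⟩ := hc
    have hparts : ∀ p ∈ a, p = 2 ∨ p = 3 := fun p h => hp p (by simp [h])
    simp only [List.sum_cons, List.sum_append, List.sum_cons, List.sum_nil] at hs
    rcases hp c (by simp) with rfl | rfl
    · exact Or.inl ⟨a, Finset.mem_filter.2 ⟨(mem_comps _ _).2 ⟨hparts, by omega⟩, ha⟩, rfl⟩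
    · exact Or.inr ⟨a, Finset.mem_filter.2 ⟨(mem_comps _ _).2 ⟨hparts, by omega⟩, ha⟩, rfl⟩
  · rintro (⟨a, ha, rfl⟩ | ⟨a, ha, rfl⟩) <;>
    · obtain ⟨hc, hrev⟩ := Finset.mem_filter.1 ha
      rw [mem_comps] at hc
      refine Finset.mem_filter.2 ⟨(mem_comps _ _).2 ⟨?_, ?_⟩, ?_⟩
      · intro p hp
        simp only [List.mem_cons, List.mem_append, List.mem_singleton] at hp
        rcases hp with rfl | hp | rfl | h
        · simp
        · exact hc.1 p hp
        · simp
        · simp at h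
      · simp only [List.sum_cons, List.sum_append, List.sum_cons, List.sum_nil]
        rw [hc.2]; omega
      · simp [hrev]

theorem qc_rec (m : ℕ) : qc (m + 6) = qc (m + 2) + qc m := by
  have hinj2 : Function.Injective (fun a : List ℕ => 2 :: (a ++ [2])) := by
    intro a b h
    simpa using h
  have hinj3 : Function.Injective (fun a : List ℕ => 3 :: (a ++ [3])) := by
    intro a b h
    simpa using h
  have hd : Disjoint ((palc (m + 2)).image (fun a => 2 :: (a ++ [2])))
      ((palc m).image (fun a => 3 :: (a ++ [3]))) := by
    rw [Finset.disjoint_left]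
    rintro l hl hl'
    simp only [Finset.mem_image] at hl hl'
    obtain ⟨a, _, rfl⟩ := hl
    obtain ⟨b, _, h⟩ := hl'
    simp at h
  rw [qc, qc, qc, palc_rec, Finset.card_union_of_disjoint hd,
    Finset.card_image_of_injective _ hinj2, Finset.card_image_of_injective _ hinj3]

theorem qE (k : ℕ) : qc (2 * k + 2) = tc (k + 1) + tc k := by
  induction k using Nat.strong_induction_on with
  | _ k ih =>
    match k, ih with
    | 0, _ => decide
    | 1, _ => decide
    | 2, _ => decide
    | (j+3), ih => ?_
    rw [show 2 * (j + 3) + 2 = 2 * j + 2 + 6 from by ring, qc_rec,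
      show 2 * j + 2 + 2 = 2 * (j + 1) + 2 from by ring,
      ih (j + 1) (by omega), ih j (by omega)]
    have h4 : tc (j + 3 + 1) = tc (j + 1 + 1) + tc (j + 1) := by
      rw [show j + 3 + 1 = j + 1 + 3 from by ring]; exact tc_rec (j + 1)
    have h5 : tc (j + 3) = tc (j + 1) + tc j := tc_rec j
    omega

theorem qO (k : ℕ) : qc (2 * k + 3) = tc k := by
  induction k using Nat.strong_induction_on with
  | _ k ih =>
    match k, ih with
    | 0, _ => decide
    | 1, _ => decide
    | 2, _ => decide
    | (j+3), ih => ?_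
    rw [show 2 * (j + 3) + 3 = 2 * j + 3 + 6 from by ring, qc_rec,
      show 2 * j + 3 + 2 = 2 * (j + 1) + 3 from by ring,
      ih (j + 1) (by omega), ih j (by omega)]
    exact (tc_rec j).symm

/-- Recursion for compositions into parts 2 and 3 up to reversal: for even `m > 3` the
count is the sum of the counts for `m - 2` and `m - 3`; for odd `m > 5` one must
subtract the number `t ((m-5)/2)` of ordered compositions of `(m-5)/2`. -/
theorem comp23_up_to_rev_recursion (m : ℕ) :
    (Even m → 3 < m →
      numComp23UpToRev m = numComp23UpToRev (m - 2) + numComp23UpToRev (m - 3)) ∧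
    (Odd m → 5 < m →
      numComp23UpToRev m = numComp23UpToRev (m - 2) + numComp23UpToRev (m - 3)
        - numComp23 ((m - 5) / 2)) := by
  constructor
  · intro hm hk
    obtain ⟨k, hk2⟩ := hm
    obtain ⟨j, hj⟩ : ∃ j, m = 2 * j + 6 ∨ m = 4 := ⟨(m - 6) / 2, by omega⟩
    rcases hj with rfl | rfl
    · rw [show 2 * j + 6 - 2 = 2 * j + 4 from by omega,
        show 2 * j + 6 - 3 = 2 * j + 3 from by omega,
        numComp23UpToRev_eq, numComp23UpToRev_eq, numComp23UpToRev_eq]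
      have c1 := count_key (2 * j + 6)
      have c2 := count_key (2 * j + 4)
      have c3 := count_key (2 * j + 3)
      have t1 : tc (2 * j + 6) = tc (2 * j + 4) + tc (2 * j + 3) := by
        have := tc_rec (2 * j + 3)
        rw [show 2 * j + 3 + 3 = 2 * j + 6 from by omega,
          show 2 * j + 3 + 1 = 2 * j + 4 from by omega] at this
        exact this
      have q1 : qc (2 * j + 6) = tc (j + 3) + tc (j + 2) := by
        have := qE (j + 2)
        rw [show 2 * (j + 2) + 2 = 2 * j + 6 from by omega,
          show j + 2 + 1 = j + 3 from by omega] at this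
        exact this
      have q2 : qc (2 * j + 4) = tc (j + 2) + tc (j + 1) := by
        have := qE (j + 1)
        rw [show 2 * (j + 1) + 2 = 2 * j + 4 from by omega,
          show j + 1 + 1 = j + 2 from by omega] at this
        exact this
      have q3 : qc (2 * j + 3) = tc j := qO j
      have t2 : tc (j + 3) = tc (j + 1) + tc j := tc_rec j
      omega
    · rw [numComp23UpToRev_eq, numComp23UpToRev_eq, numComp23UpToRev_eq]
      decide
  · intro hm hk
    obtain ⟨k, hk2⟩ := hm
    obtain ⟨j, rfl⟩ : ∃ j, m = 2 * j + 7 := ⟨(m - 7) / 2, by omega⟩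
    rw [show 2 * j + 7 - 2 = 2 * j + 5 from by omega,
      show 2 * j + 7 - 3 = 2 * j + 4 from by omega,
      show (2 * j + 7 - 5) / 2 = j + 1 from by omega,
      numComp23UpToRev_eq, numComp23UpToRev_eq, numComp23UpToRev_eq, numComp23_eq]
    have c1 := count_key (2 * j + 7)
    have c2 := count_key (2 * j + 5)
    have c3 := count_key (2 * j + 4)
    have t1 : tc (2 * j + 7) = tc (2 * j + 5) + tc (2 * j + 4) := by
      have := tc_rec (2 * j + 4)
      rw [show 2 * j + 4 + 3 = 2 * j + 7 from by omega,
        show 2 * j + 4 + 1 = 2 * j + 5 from by omega] at this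
      exact this
    have q1 : qc (2 * j + 7) = tc (j + 2) := by
      have := qO (j + 2)
      rw [show 2 * (j + 2) + 3 = 2 * j + 7 from by omega] at this
      exact this
    have q2 : qc (2 * j + 5) = tc (j + 1) := by
      have := qO (j + 1)
      rw [show 2 * (j + 1) + 3 = 2 * j + 5 from by omega] at this
      exact this
    have q3 : qc (2 * j + 4) = tc (j + 2) + tc (j + 1) := by
      have := qE (j + 1)
      rw [show 2 * (j + 1) + 2 = 2 * j + 4 from by omega,
        show j + 1 + 1 = j + 2 from by omega] at this
      exact this
    omega
end
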